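/- In the Manhattan MTM on the N×N grid, the total number Γ(i, j) of feasible traces that visit cell (i, j), summed over all start points, equals (4N² − 6N + 2)(i + j) − (4N − 2)(i² + j²) + 6N² − 8N + 3. -/
import Mathlib


open Finset

/-- The case formula for `η((i', j'), (i, j))`, the number of feasible one-corner Manhattan
traces on the `N × N` grid starting at `(i', j')` and visiting `(i, j)`. -/
def η (N i j i' j' : ℤ) : ℤ :=
  if i' < i ∧ j' < j then 2 * N - i - j
  else if i < i' ∧ j < j' then i + j + 2
  else if i' < i ∧ j < j' then N + 1 - i + j
  else if i < i' ∧ j' < j then N + 1 + i - j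
  else if i' = i ∧ j' < j then N ^ 2 - N * j
  else if i' < i ∧ j' = j then N ^ 2 - N * i
  else if i' = i ∧ j < j' then N + N * j
  else if i < i' ∧ j' = j then N + N * i
  else 2 * N ^ 2 - 2 * N + 1

lemma eta1 (N i j i' j' : ℤ) (h1 : i' < i) (h2 : j' < j) : η N i j i' j' = 2 * N - i - j := by
  unfold η; rw [if_pos ⟨h1, h2⟩]

lemma eta2 (N i j i' j' : ℤ) (h1 : i < i') (h2 : j < j') : η N i j i' j' = i + j + 2 := by
  unfold η; rw [if_neg (by omega), if_pos ⟨h1, h2⟩]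

lemma eta3 (N i j i' j' : ℤ) (h1 : i' < i) (h2 : j < j') : η N i j i' j' = N + 1 - i + j := by
  unfold η; rw [if_neg (by omega), if_neg (by omega), if_pos ⟨h1, h2⟩]

lemma eta4 (N i j i' j' : ℤ) (h1 : i < i') (h2 : j' < j) : η N i j i' j' = N + 1 + i - j := by
  unfold η; rw [if_neg (by omega), if_neg (by omega), if_neg (by omega), if_pos ⟨h1, h2⟩]

lemma eta5 (N i j j' : ℤ) (h2 : j' < j) : η N i j i j' = N ^ 2 - N * j := by
  unfold η
  rw [if_neg (by omega), if_neg (by omega), if_neg (by omega), if_neg (by omega),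
    if_pos ⟨rfl, h2⟩]

lemma eta6 (N i j i' : ℤ) (h1 : i' < i) : η N i j i' j = N ^ 2 - N * i := by
  unfold η
  rw [if_neg (by omega), if_neg (by omega), if_neg (by omega), if_neg (by omega),
    if_neg (by omega), if_pos ⟨h1, rfl⟩]

lemma eta7 (N i j j' : ℤ) (h2 : j < j') : η N i j i j' = N + N * j := by
  unfold η
  rw [if_neg (by omega), if_neg (by omega), if_neg (by omega), if_neg (by omega),
    if_neg (by omega), if_neg (by omega), if_pos ⟨rfl, h2⟩]

lemma eta8 (N i j i' : ℤ) (h1 : i < i') : η N i j i' j = N + N * i := by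
  unfold η
  rw [if_neg (by omega), if_neg (by omega), if_neg (by omega), if_neg (by omega),
    if_neg (by omega), if_neg (by omega), if_neg (by omega), if_pos ⟨h1, rfl⟩]

lemma eta9 (N i j : ℤ) : η N i j i j = 2 * N ^ 2 - 2 * N + 1 := by
  unfold η
  rw [if_neg (by omega), if_neg (by omega), if_neg (by omega), if_neg (by omega),
    if_neg (by omega), if_neg (by omega), if_neg (by omega), if_neg (by omega)]

lemma sum_piecewise_const (N x a b c : ℤ) (f : ℤ → ℤ) (hx0 : 0 ≤ x) (hx : x ≤ N - 1)
    (ha : ∀ t, t < x → f t = a) (hb : f x = b)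
    (hc : ∀ t, x < t → f t = c) :
    ∑ t ∈ Finset.Icc 0 (N - 1), f t = x * a + b + (N - 1 - x) * c := by
  have hsplit : Finset.Icc (0 : ℤ) (N - 1)
      = (Finset.Ico 0 x ∪ {x}) ∪ Finset.Ioc x (N - 1) := by
    ext t
    simp only [Finset.mem_Icc, Finset.mem_union, Finset.mem_Ico, Finset.mem_Ioc,
      Finset.mem_singleton]
    omega
  have hd1 : Disjoint (Finset.Ico 0 x) ({x} : Finset ℤ) := by
    simp only [Finset.disjoint_left, Finset.mem_Ico, Finset.mem_singleton]
    omega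
  have hd2 : Disjoint (Finset.Ico 0 x ∪ {x}) (Finset.Ioc x (N - 1)) := by
    simp only [Finset.disjoint_left, Finset.mem_union, Finset.mem_Ico, Finset.mem_Ioc,
      Finset.mem_singleton]
    omega
  rw [hsplit, Finset.sum_union hd2, Finset.sum_union hd1]
  have h1 : ∑ t ∈ Finset.Ico 0 x, f t = x * a := by
    rw [Finset.sum_congr rfl (fun t ht => ha t (Finset.mem_Ico.mp ht).2),
      Finset.sum_const, Int.card_Ico, nsmul_eq_mul]
    have hx' : ((x - 0).toNat : ℤ) = x := by omega
    rw [hx']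
  have h2 : ∑ t ∈ Finset.Ioc x (N - 1), f t = (N - 1 - x) * c := by
    rw [Finset.sum_congr rfl (fun t ht => hc t (Finset.mem_Ioc.mp ht).1),
      Finset.sum_const, Int.card_Ioc, nsmul_eq_mul]
    have hx' : ((N - 1 - x).toNat : ℤ) = N - 1 - x := by omega
    rw [hx']
  rw [h1, h2, Finset.sum_singleton, hb]

/-- The total number `Γ(i, j)` of feasible traces visiting cell `(i, j)`,
summed over all start points of the grid, equals
`(4N² − 6N + 2)(i + j) − (4N − 2)(i² + j²) + 6N² − 8N + 3`. -/
theorem manhattan_gamma_formula (N i j : ℤ) (hN : 1 ≤ N)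
    (hi0 : 0 ≤ i) (hi : i ≤ N - 1) (hj0 : 0 ≤ j) (hj : j ≤ N - 1) :
    (∑ i' ∈ Finset.Icc 0 (N - 1), ∑ j' ∈ Finset.Icc 0 (N - 1), η N i j i' j') =
      (4 * N ^ 2 - 6 * N + 2) * (i + j) - (4 * N - 2) * (i ^ 2 + j ^ 2)
        + 6 * N ^ 2 - 8 * N + 3 := by
  have key : ∑ i' ∈ Finset.Icc 0 (N - 1), ∑ j' ∈ Finset.Icc 0 (N - 1), η N i j i' j' =
      i * (j * (2 * N - i - j) + (N ^ 2 - N * i) + (N - 1 - j) * (N + 1 - i + j))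
      + (j * (N ^ 2 - N * j) + (2 * N ^ 2 - 2 * N + 1) + (N - 1 - j) * (N + N * j))
      + (N - 1 - i) * (j * (N + 1 + i - j) + (N + N * i) + (N - 1 - j) * (i + j + 2)) := by
    apply sum_piecewise_const N i _ _ _ _ hi0 hi
    · intro t ht
      apply sum_piecewise_const N j _ _ _ _ hj0 hj
      · intro s hs; exact eta1 N i j t s ht hs
      · exact eta6 N i j t ht
      · intro s hs; exact eta3 N i j t s ht hs
    · apply sum_piecewise_const N j _ _ _ _ hj0 hj
      · intro s hs; exact eta5 N i j s hs
      · exact eta9 N i j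
      · intro s hs; exact eta7 N i j s hs
    · intro t ht
      apply sum_piecewise_const N j _ _ _ _ hj0 hj
      · intro s hs; exact eta4 N i j t s ht hs
      · exact eta8 N i j t ht
      · intro s hs; exact eta2 N i j t s ht hs
  rw [key]; ring
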